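/- If M_min ⊆ {1,…,N} satisfies the Dörfler criterion with minimal cardinality N_min, π sorts x in descending order, and n is minimal with θ·∑_j x_j ≤ ∑_{i=1}^n x_{π(i)}, then n − 1 < N_min ≤ n, i.e., n = N_min. -/

import Mathlib

/-!
Because π lists `x` in decreasing order, the first `k` sorted entries carry the largest sum among
all `k`-element subsets of `{1, …, N}`. So `{π 1, …, π n}` satisfies the Dörfler criterion, giving
`#Mmin ≤ n`, while the first `#Mmin` sorted entries sum to at least `∑ j ∈ Mmin, x j`, giving
`n ≤ #Mmin`. Strictness of `n - 1 < #Mmin` comes from `Mmin ≠ ∅`, forced by `x ≠ 0` and `θ > 0`.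
-/

open Finset

theorem Finset.sum_le_sum_Icc_card_of_antitoneOn {M : Type*} [AddCommMonoid M] [PartialOrder M]
    [IsOrderedAddMonoid M] {N : ℕ} {y : ℕ → M} (hy : AntitoneOn y (Icc 1 N)) {T : Finset ℕ}
    (hT : T ⊆ Icc 1 N) : ∑ i ∈ T, y i ≤ ∑ i ∈ Icc 1 #T, y i := by
  induction T using Finset.induction_on_max with
  | empty => simp
  | insert a T ha ih =>
    have haT : a ∉ T := fun h => (ha a h).false
    have haN : a ∈ Icc 1 N := hT (mem_insert_self a T)
    have hcard : #T + 1 ≤ a := by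
      have : insert a T ⊆ Icc 1 a := fun b hb => by
        rcases mem_insert.mp hb with rfl | hb
        · exact mem_Icc.mpr ⟨(mem_Icc.mp haN).1, le_rfl⟩
        · exact mem_Icc.mpr ⟨(mem_Icc.mp (hT (mem_insert_of_mem hb))).1, (ha b hb).le⟩
      simpa [card_insert_of_notMem haT] using card_le_card this
    have hya : y a ≤ y (#T + 1) :=
      hy (mem_Icc.mpr ⟨by omega, hcard.trans (mem_Icc.mp haN).2⟩) haN hcard
    rw [sum_insert haT, card_insert_of_notMem haT, sum_Icc_succ_top (by omega), add_comm]
    exact add_le_add (ih ((subset_insert a T).trans hT)) hya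

theorem Equiv.Perm.symm_mem_of_forall_mem {α : Type*} {π : Equiv.Perm α} {s : Finset α}
    (hπ : ∀ a ∈ s, π a ∈ s) {a : α} (ha : a ∈ s) : π.symm a ∈ s := by
  have hmap : s.map π.toEmbedding = s := map_eq_of_subset fun b hb => by
    obtain ⟨c, hc, rfl⟩ := mem_map.mp hb
    exact hπ c hc
  rw [← hmap] at ha
  obtain ⟨c, hc, rfl⟩ := mem_map.mp ha
  simpa using hc

theorem Finset.sum_le_sum_Icc_card_of_antitoneOn_comp_perm {M : Type*} [AddCommMonoid M]
    [PartialOrder M] [IsOrderedAddMonoid M] {N : ℕ} {x : ℕ → M} {π : Equiv.Perm ℕ}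
    (hπ : ∀ j ∈ Icc 1 N, π j ∈ Icc 1 N) (hsort : AntitoneOn (x ∘ π) (Icc 1 N))
    {A : Finset ℕ} (hA : A ⊆ Icc 1 N) : ∑ j ∈ A, x j ≤ ∑ i ∈ Icc 1 #A, x (π i) := by
  have hsub : A.map π.symm.toEmbedding ⊆ Icc 1 N := fun i hi => by
    obtain ⟨j, hj, rfl⟩ := mem_map.mp hi
    exact π.symm_mem_of_forall_mem hπ (hA hj)
  simpa [sum_map] using sum_le_sum_Icc_card_of_antitoneOn hsort hsub

theorem stmt_3_general (N : ℕ) (θ : ℝ) (hθ0 : 0 < θ) (x : ℕ → ℝ)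
    (hx : ∀ j ∈ Finset.Icc 1 N, 0 ≤ x j)
    (hx0 : ∃ j ∈ Finset.Icc 1 N, x j ≠ 0)
    (π : Equiv.Perm ℕ) (hπ : ∀ j ∈ Finset.Icc 1 N, π j ∈ Finset.Icc 1 N)
    (hsort : ∀ i ∈ Finset.Icc 1 N, ∀ j ∈ Finset.Icc 1 N, i ≤ j → x (π j) ≤ x (π i))
    (Mmin : Finset ℕ) (hMsub : Mmin ⊆ Finset.Icc 1 N)
    (hMcrit : θ * ∑ j ∈ Finset.Icc 1 N, x j ≤ ∑ j ∈ Mmin, x j)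
    (hMminimal : ∀ M' ⊆ Finset.Icc 1 N,
      θ * ∑ j ∈ Finset.Icc 1 N, x j ≤ ∑ j ∈ M', x j → Mmin.card ≤ M'.card)
    (n : ℕ)
    (hn : θ * ∑ j ∈ Finset.Icc 1 N, x j ≤ ∑ i ∈ Finset.Icc 1 n, x (π i))
    (hnmin : ∀ m, m < n →
      ¬(θ * ∑ j ∈ Finset.Icc 1 N, x j ≤ ∑ i ∈ Finset.Icc 1 m, x (π i))) :
    n - 1 < Mmin.card ∧ Mmin.card ≤ n ∧ n = Mmin.card := by
  have hsum_pos : 0 < ∑ j ∈ Icc 1 N, x j := by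
    obtain ⟨j, hj, hxj⟩ := hx0
    exact sum_pos' hx ⟨j, hj, (hx j hj).lt_of_ne' hxj⟩
  have hMmin_pos : 0 < #Mmin := by
    rw [card_pos, nonempty_iff_ne_empty]
    rintro rfl
    simp only [sum_empty] at hMcrit
    nlinarith
  have hMmin_le : #Mmin ≤ n := by
    rcases le_or_gt n N with hnN | hNn
    · have hsub : (Icc 1 n).map π.toEmbedding ⊆ Icc 1 N := fun j hj => by
        obtain ⟨i, hi, rfl⟩ := mem_map.mp hj
        exact hπ i (Icc_subset_Icc_right hnN hi)
      simpa using hMminimal _ hsub (by simpa [sum_map] using hn)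
    · simpa using (card_le_card hMsub).trans (by simpa using hNn.le)
  have hle_Mmin : n ≤ #Mmin := by
    by_contra! h
    exact hnmin _ h (hMcrit.trans (sum_le_sum_Icc_card_of_antitoneOn_comp_perm hπ hsort hMsub))
  omega

/-- If M_min ⊆ {1,…,N} satisfies the Dörfler criterion with minimal cardinality N_min,
π sorts x in descending order, and n is minimal with θ·∑ x_j ≤ ∑_{i≤n} x_{π(i)},
then n − 1 < N_min ≤ n, i.e., n = N_min. -/
theorem stmt_3 (N : ℕ) (θ : ℝ) (hθ0 : 0 < θ) (hθ1 : θ < 1) (x : ℕ → ℝ)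
    (hx : ∀ j ∈ Finset.Icc 1 N, 0 ≤ x j)
    (hx0 : ∃ j ∈ Finset.Icc 1 N, x j ≠ 0)
    (π : Equiv.Perm ℕ) (hπ : ∀ j ∈ Finset.Icc 1 N, π j ∈ Finset.Icc 1 N)
    (hsort : ∀ i ∈ Finset.Icc 1 N, ∀ j ∈ Finset.Icc 1 N, i ≤ j → x (π j) ≤ x (π i))
    (Mmin : Finset ℕ) (hMsub : Mmin ⊆ Finset.Icc 1 N)
    (hMcrit : θ * ∑ j ∈ Finset.Icc 1 N, x j ≤ ∑ j ∈ Mmin, x j)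
    (hMminimal : ∀ M' ⊆ Finset.Icc 1 N,
      θ * ∑ j ∈ Finset.Icc 1 N, x j ≤ ∑ j ∈ M', x j → Mmin.card ≤ M'.card)
    (n : ℕ)
    (hn : θ * ∑ j ∈ Finset.Icc 1 N, x j ≤ ∑ i ∈ Finset.Icc 1 n, x (π i))
    (hnmin : ∀ m, m < n →
      ¬(θ * ∑ j ∈ Finset.Icc 1 N, x j ≤ ∑ i ∈ Finset.Icc 1 m, x (π i))) :
    n - 1 < Mmin.card ∧ Mmin.card ≤ n ∧ n = Mmin.card :=
  stmt_3_general N θ hθ0 x hx hx0 π hπ hsort Mmin hMsub hMcrit hMminimal n hn hnmin
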